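/- arXiv:2510.22464 — 3 statements merged into one kernel-verified Lean document; each statement's English description precedes it below -/
import Mathlib

section
/- Let K : ℝ → ℝ be a symmetric continuous kernel with 0 ≤ K(x) ≤ K(0) for all x, attaining its maximum K(0) > 0 only at x = 0, and with K(x) → 0 as |x| → ∞. Let a = (a_1, ..., a_m) be a finite list of real numbers with unique mode t. Then for every r > 0 there exists h_0 > 0 such that for all bandwidths 0 < h ≤ h_0 and all x ∈ ℝ with |x − t| ≥ r, KD(a, K, h, t) > KD(a, K, h, x); in particular every global maximizer of x ↦ KD(a, K, h, x) lies within distance r of t. -/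
open Finset Filter

/-- Number of occurrences of the value `s` in the finite list `a`. -/
noncomputable def nCount {m : ℕ} (a : Fin m → ℝ) (s : ℝ) : ℕ :=
  (Finset.univ.filter (fun i => a i = s)).card

/-- `t` is the unique mode of the finite list `a`: it appears in `a` and its
multiplicity strictly exceeds that of every other value appearing in `a`. -/
def UniqueMode {m : ℕ} (a : Fin m → ℝ) (t : ℝ) : Prop :=
  (∃ i, a i = t) ∧ ∀ s : ℝ, (∃ i, a i = s) → s ≠ t → nCount a s < nCount a t

/-- Kernel density of the list `a` with kernel `K`, bandwidth `h`, at `x`. -/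
noncomputable def KD {m : ℕ} (a : Fin m → ℝ) (K : ℝ → ℝ) (h x : ℝ) : ℝ :=
  (1 / (m * h)) * ∑ i, K ((x - a i) / h)

/-!
Let `0 < δ ≤ r` be at most the smallest gap between distinct data values. Once `h` is so small that
`K(u / h) < K(0) / (2m)` for `|u| ≥ δ / 2`, the data points farther than `δ / 2` from `x`
contribute less than `K(0) / 2` in total to `∑ K((x - aᵢ) / h)`, and the nearer ones all
carry one value `s`. For `|x - t| ≥ r` this value is not the mode, so the density at `x` is below
`(n_s + 1/2) K(0) / (mh) < n_t K(0) / (mh)`, which is at most the density at `t`.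
-/

theorem exists_pos_forall_le_abs_sub {ι : Type*} [Finite ι] (a : ι → ℝ) :
    ∃ δ, 0 < δ ∧ ∀ i j, a i ≠ a j → δ ≤ |a i - a j| := by
  have hsep : ∀ᶠ δ in nhdsWithin (0 : ℝ) (Set.Ioi 0),
      ∀ i j, a i ≠ a j → δ ≤ |a i - a j| := by
    simp only [eventually_all]
    intro i j hij
    exact eventually_nhdsWithin_of_eventually_nhds
      (eventually_le_nhds (abs_pos.2 (sub_ne_zero.2 hij)))
  obtain ⟨δ, hδsep, hδ⟩ := (hsep.and self_mem_nhdsWithin).exists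
  exact ⟨δ, hδ, hδsep⟩

theorem exists_forall_lt_of_tendsto_cocompact {K : ℝ → ℝ}
    (hvanish : Tendsto K (cocompact ℝ) (nhds 0)) {ε ρ : ℝ} (hε : 0 < ε) (hρ : 0 < ρ) :
    ∃ h₀, 0 < h₀ ∧ ∀ h, 0 < h → h ≤ h₀ → ∀ u, ρ ≤ |u| → K (u / h) < ε := by
  have hev : ∀ᶠ u in comap norm atTop, K u < ε := by
    rw [comap_norm_atTop, Metric.cobounded_eq_cocompact]
    exact hvanish.eventually (gt_mem_nhds hε)
  obtain ⟨R, hR⟩ := eventually_atTop.1 (eventually_comap.1 hev)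
  have hR' : 0 < max R 1 := lt_max_of_lt_right one_pos
  refine ⟨ρ / max R 1, by positivity, fun h hh hhh₀ u hu => hR _ ?_ _ rfl⟩
  calc R ≤ max R 1 := le_max_left _ _
    _ = ρ / (ρ / max R 1) := by field_simp
    _ ≤ ρ / h := div_le_div_of_nonneg_left hρ.le hh hhh₀
    _ ≤ ‖u / h‖ := by
      rw [Real.norm_eq_abs, abs_div, abs_of_pos hh]
      gcongr

section Mode

variable {m : ℕ} {a : Fin m → ℝ} {t δ : ℝ}

theorem UniqueMode.pos (hmode : UniqueMode a t) : 0 < m := by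
  obtain ⟨i, -⟩ := hmode.1
  exact i.pos

theorem UniqueMode.one_le_nCount (hmode : UniqueMode a t) : 1 ≤ nCount a t := by
  obtain ⟨i, hi⟩ := hmode.1
  exact Finset.card_pos.2 ⟨i, Finset.mem_filter.2 ⟨Finset.mem_univ _, hi⟩⟩

/-- Points `δ / 2`-close to `x` are `δ`-close to each other, hence share one value,
which is not `t`. -/
theorem card_filter_abs_sub_lt_lt_nCount (hmode : UniqueMode a t)
    (hsep : ∀ i j, a i ≠ a j → δ ≤ |a i - a j|) {x : ℝ} (hx : δ / 2 ≤ |x - t|) :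
    #{i | |x - a i| < δ / 2} < nCount a t := by
  rcases Finset.eq_empty_or_nonempty ({i | |x - a i| < δ / 2} : Finset (Fin m))
    with hempty | ⟨j, hj⟩
  · rw [hempty, Finset.card_empty]
    exact hmode.one_le_nCount
  have hj : |x - a j| < δ / 2 := (Finset.mem_filter.1 hj).2
  have hjt : a j ≠ t := by
    rintro rfl
    linarith
  have hsub : ({i | |x - a i| < δ / 2} : Finset (Fin m)) ⊆
      ({i | a i = a j} : Finset (Fin m)) := by
    intro i hi
    have hi : |x - a i| < δ / 2 := (Finset.mem_filter.1 hi).2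
    refine Finset.mem_filter.2 ⟨Finset.mem_univ _, ?_⟩
    by_contra hij
    have := hsep i j hij
    have := abs_sub_le (a i) x (a j)
    rw [abs_sub_comm (a i) x] at this
    linarith
  exact (Finset.card_le_card hsub).trans_lt (hmode.2 _ ⟨j, rfl⟩ hjt)

theorem nCount_mul_le_sum {φ : ℝ → ℝ} (hnonneg : ∀ u, 0 ≤ φ u) (t : ℝ) :
    nCount a t * φ 0 ≤ ∑ i, φ (t - a i) := by
  have hmode_sum : ∑ i ∈ {i | a i = t}, φ (t - a i) = nCount a t * φ 0 := by
    rw [Finset.sum_congr rfl fun i hi => by rw [(Finset.mem_filter.1 hi).2, sub_self],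
      Finset.sum_const, nsmul_eq_mul, nCount]
  rw [← hmode_sum]
  exact Finset.sum_le_sum_of_subset_of_nonneg (Finset.filter_subset _ _)
    fun i _ _ => hnonneg _

theorem sum_lt_sum_at_mode {φ : ℝ → ℝ} (hnonneg : ∀ u, 0 ≤ φ u) (hle : ∀ u, φ u ≤ φ 0)
    (hmode : UniqueMode a t) (hsep : ∀ i j, a i ≠ a j → δ ≤ |a i - a j|)
    (hsmall : ∀ u, δ / 2 ≤ |u| → φ u < φ 0 / (2 * m)) {x : ℝ} (hx : δ / 2 ≤ |x - t|) :
    ∑ i, φ (x - a i) < ∑ i, φ (t - a i) := by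
  set N : Finset (Fin m) := {i | |x - a i| < δ / 2}
  have hφ0 : 0 < φ 0 / (2 * m) := (hnonneg _).trans_lt (hsmall _ hx)
  have hm : (0 : ℝ) < m := Nat.cast_pos.2 hmode.pos
  have hnear : ∑ i ∈ N, φ (x - a i) ≤ #N * φ 0 := by
    simpa using Finset.sum_le_card_nsmul N _ _ fun i _ => hle (x - a i)
  have hfar : ∑ i ∈ univ.filter (fun i => ¬ |x - a i| < δ / 2), φ (x - a i)
      ≤ m * (φ 0 / (2 * m)) := by
    calc _ ≤ #(univ.filter (fun i => ¬ |x - a i| < δ / 2)) * (φ 0 / (2 * m)) := by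
          simpa using Finset.sum_le_card_nsmul _ _ _
            fun i hi => (hsmall _ (not_lt.1 (Finset.mem_filter.1 hi).2)).le
      _ ≤ m * (φ 0 / (2 * m)) := by
          gcongr
          exact_mod_cast (Finset.card_le_univ _).trans_eq (Fintype.card_fin m)
  have hcount : (#N : ℝ) + 1 ≤ nCount a t := by
    exact_mod_cast card_filter_abs_sub_lt_lt_nCount hmode hsep hx
  have hpos : 0 < φ 0 := (div_pos_iff_of_pos_right (by positivity)).1 hφ0
  calc ∑ i, φ (x - a i) ≤ #N * φ 0 + m * (φ 0 / (2 * m)) := by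
        rw [← Finset.sum_filter_add_sum_filter_not univ (fun i => |x - a i| < δ / 2)]
        exact add_le_add hnear hfar
    _ = (#N + 1 / 2) * φ 0 := by field_simp
    _ < nCount a t * φ 0 := by gcongr; linarith
    _ ≤ ∑ i, φ (t - a i) := nCount_mul_le_sum hnonneg t

end Mode

theorem stmt1_general (K : ℝ → ℝ)
    (hnonneg : ∀ x, 0 ≤ K x) (hle : ∀ x, K x ≤ K 0)
    (hpos : 0 < K 0)
    (hvanish : Tendsto K (cocompact ℝ) (nhds 0))
    (m : ℕ) (a : Fin m → ℝ) (t : ℝ)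
    (hmode : UniqueMode a t) :
    ∀ r : ℝ, 0 < r → ∃ h₀ : ℝ, 0 < h₀ ∧ ∀ h : ℝ, 0 < h → h ≤ h₀ →
      (∀ x : ℝ, r ≤ |x - t| → KD a K h x < KD a K h t) ∧
      (∀ x : ℝ, (∀ y : ℝ, KD a K h y ≤ KD a K h x) → |x - t| < r) := by
  intro r hr
  obtain ⟨δ, hδ, hsep⟩ := exists_pos_forall_le_abs_sub a
  have hm : (0 : ℝ) < m := Nat.cast_pos.2 hmode.pos
  obtain ⟨h₀, hh₀, hsmall⟩ := exists_forall_lt_of_tendsto_cocompact hvanish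
    (ε := K 0 / (2 * m)) (by positivity) (half_pos (lt_min hδ hr))
  refine ⟨h₀, hh₀, fun h hh hhh₀ => ?_⟩
  have hfar : ∀ x, r ≤ |x - t| → KD a K h x < KD a K h t := fun x hx => by
    refine mul_lt_mul_of_pos_left ?_ (by positivity)
    refine sum_lt_sum_at_mode (φ := fun u => K (u / h)) (fun u => hnonneg _)
      (fun u => by simpa using hle (u / h)) hmode
      (fun i j hij => (min_le_left δ r).trans (hsep i j hij))
      (fun u hu => by simpa using hsmall h hh hhh₀ u hu) ?_
    linarith [min_le_right δ r]
  refine ⟨hfar, fun x hmax => ?_⟩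
  by_contra! hx
  exact (hmax t).not_gt (hfar x hx)

/-- For a symmetric continuous kernel `K` with `0 ≤ K(x) ≤ K(0)`,
attaining its maximum `K(0) > 0` only at `0`, vanishing at infinity, and a finite
list `a` with unique mode `t`: for every `r > 0` there is `h₀ > 0` such that for all
bandwidths `0 < h ≤ h₀` and all `x` with `|x − t| ≥ r`, `KD(a,K,h,t) > KD(a,K,h,x)`;
in particular every global maximizer of `KD(a,K,h,·)` lies within distance `r` of `t`. -/
theorem stmt1 (K : ℝ → ℝ)
    (hcont : Continuous K)
    (hsymm : ∀ x, K (-x) = K x)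
    (hnonneg : ∀ x, 0 ≤ K x) (hle : ∀ x, K x ≤ K 0)
    (hpos : 0 < K 0)
    (hmaxonly : ∀ x, K x = K 0 → x = 0)
    (hvanish : Tendsto K (cocompact ℝ) (nhds 0))
    (m : ℕ) (a : Fin m → ℝ) (t : ℝ)
    (hmode : UniqueMode a t) :
    ∀ r : ℝ, 0 < r → ∃ h₀ : ℝ, 0 < h₀ ∧ ∀ h : ℝ, 0 < h → h ≤ h₀ →
      (∀ x : ℝ, r ≤ |x - t| → KD a K h x < KD a K h t) ∧
      (∀ x : ℝ, (∀ y : ℝ, KD a K h y ≤ KD a K h x) → |x - t| < r) :=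
  stmt1_general K hnonneg hle hpos hvanish m a t hmode
end

section
/- Let K : ℝ → ℝ be Lipschitz continuous with Lipschitz constant L_K, let h > 0, and let a = (a_1, ..., a_m) and b = (b_1, ..., b_m) be two finite lists of real numbers of the same length m. Then sup_{x ∈ ℝ} |KD(a, K, h, x) − KD(b, K, h, x)| ≤ (L_K/(m h²)) Σ_{i=1}^m |a_i − b_i|. -/
open Finset

theorem LipschitzWith.norm_sum_comp_sub_sum_comp_le {ι α E : Type*} [PseudoMetricSpace α]
    [SeminormedAddCommGroup E] {f : α → E} {L : NNReal} (hf : LipschitzWith L f)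
    (s : Finset ι) (a b : ι → α) :
    ‖∑ i ∈ s, f (a i) - ∑ i ∈ s, f (b i)‖ ≤ L * ∑ i ∈ s, dist (a i) (b i) := by
  rw [← sum_sub_distrib, mul_sum]
  refine (norm_sum_le _ _).trans (sum_le_sum fun i _ => ?_)
  rw [← dist_eq_norm]
  exact hf.dist_le_mul _ _

/- For `h = 0` both sides vanish, since `(x - t) / 0 = 0` and `L / 0 = 0`. -/
theorem LipschitzWith.comp_const_sub_div {K : ℝ → ℝ} {L : NNReal} (hK : LipschitzWith L K)
    (x h : ℝ) : LipschitzWith (L / ‖h‖₊) fun t => K ((x - t) / h) := by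
  refine LipschitzWith.of_dist_le_mul fun s t => ?_
  calc dist (K ((x - s) / h)) (K ((x - t) / h))
      ≤ L * dist ((x - s) / h) ((x - t) / h) := hK.dist_le_mul _ _
    _ = L / |h| * dist s t := by
      rw [Real.dist_eq, Real.dist_eq, div_sub_div_same, sub_sub_sub_cancel_left, abs_div,
        abs_sub_comm, mul_div_assoc', div_mul_eq_mul_div]
    _ = ((L / ‖h‖₊ : NNReal) : ℝ) * dist s t := by
      rw [NNReal.coe_div, coe_nnnorm, Real.norm_eq_abs]

theorem stmt2_general (K : ℝ → ℝ) (LK : NNReal) (hK : LipschitzWith LK K)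
    (h : ℝ) (m : ℕ) (a b : Fin m → ℝ) :
    ∀ x : ℝ, |KD a K h x - KD b K h x| ≤ ((LK : ℝ) / (m * h ^ 2)) * ∑ i, |a i - b i| := by
  intro x
  have hsum := (hK.comp_const_sub_div x h).norm_sum_comp_sub_sum_comp_le univ a b
  simp only [Real.norm_eq_abs, Real.dist_eq, NNReal.coe_div, coe_nnnorm] at hsum
  calc |KD a K h x - KD b K h x|
      = |1 / (m * h)| * |∑ i, K ((x - a i) / h) - ∑ i, K ((x - b i) / h)| := by
        rw [KD, KD, ← mul_sub, abs_mul]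
    _ ≤ |1 / (m * h)| * (LK / |h| * ∑ i, |a i - b i|) := by gcongr
    _ = (LK / (m * h ^ 2)) * ∑ i, |a i - b i| := by
      rw [abs_div, abs_one, abs_mul, Nat.abs_cast, ← sq_abs h]
      ring

/-- If `K` is Lipschitz with constant `L_K`, `h > 0`, and `a, b` are
two lists of the same length `m`, then
`sup_x |KD(a,K,h,x) − KD(b,K,h,x)| ≤ (L_K/(m h²)) Σ_i |a_i − b_i|`. -/
theorem stmt2 (K : ℝ → ℝ) (LK : NNReal) (hK : LipschitzWith LK K)
    (h : ℝ) (hh : 0 < h) (m : ℕ) (a b : Fin m → ℝ) :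
    ∀ x : ℝ, |KD a K h x - KD b K h x| ≤ ((LK : ℝ) / (m * h ^ 2)) * ∑ i, |a i - b i| :=
  stmt2_general K LK hK h m a b
end

section
/- Let {h_j}_{j≥1} be an orthonormal system in L²(D, f_S) with each h_j ∈ L⁴(D, f_S), let U = Σ_{j≥1} α_u^(j) h_j (L²-convergent, Σ (α_u^(j))² < ∞), and for d ∈ ℕ set U_{>d} = Σ_{k>d} α_u^(k) h_k and S_in = Σ_{j≤d} (α_u^(j))². Assume: (i) max_{1≤j≤d} ‖h_j‖_∞ ≤ M < ∞; (ii) for each j ≤ d the zero set {s : h_j(s) = 0} has f_S-measure zero; (iii) ‖U_{>d}‖²_{f_S} ≤ ε with ε < c_* S_in / (4 M²), where c_* = min_{1≤j≤d} inf{ ∫_D h_j² v² f_S : v ∈ span{h_k : k ≤ d, k ≠ j}, ‖v‖_{f_S} = 1 } > 0. Then for every j ≤ d with α_u^(j) = 0, one has ‖h_j U‖²_{f_S} > ‖h_j U_{>d}‖²_{f_S}. -/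
/-
Write `V = Σ_{k ≤ d} α_k h_k` and `T = U - V`. When `α_j = 0`, the vector `V / ‖V‖` is a competitor
in the infimum defining `c_*` for the index `j`, so `‖h_j V‖² ≥ c_* ‖V‖² = c_* S_in > 4 M² ε`, while
`‖h_j T‖² ≤ M² ‖T‖² ≤ M² ε`. Since `(a + b)² ≥ a²/2 - b²`, we get
`‖h_j U‖² ≥ ‖h_j V‖²/2 - ‖h_j T‖² > 2 M² ε - M² ε ≥ ‖h_j T‖²`.
-/

open MeasureTheory Filter

theorem sum_mul_mem_of_coeff_eq_zero {E ι : Type*} (s : Finset ι) (h : ι → E → ℝ) (a : ι → ℝ)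
    (K : Submodule ℝ (E → ℝ)) {j : ι} (hK : ∀ k ∈ s, k ≠ j → h k ∈ K) (ha : a j = 0) :
    (fun x => ∑ k ∈ s, a k * h k x) ∈ K := by
  have hsum : (fun x => ∑ k ∈ s, a k * h k x) = ∑ k ∈ s, a k • h k := by
    ext x; simp [Finset.sum_apply]
  rw [hsum]
  refine K.sum_mem fun k hk => ?_
  rcases eq_or_ne k j with rfl | hkj
  · simp [ha]
  · exact K.smul_mem _ (hK k hk hkj)

section

variable {E : Type*} [MeasurableSpace E] {μ : Measure E}

theorem integral_sq_sum_mul_of_orthonormal {ι : Type*} [DecidableEq ι] (s : Finset ι)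
    (h : ι → E → ℝ) (a : ι → ℝ) (hL2 : ∀ k ∈ s, MemLp (h k) 2 μ)
    (horth : ∀ k ∈ s, ∀ l ∈ s, ∫ x, h k x * h l x ∂μ = if k = l then 1 else 0) :
    ∫ x, (∑ k ∈ s, a k * h k x) ^ 2 ∂μ = ∑ k ∈ s, a k ^ 2 := by
  have hint : ∀ k ∈ s, ∀ l ∈ s, Integrable (fun x => a k * a l * (h k x * h l x)) μ :=
    fun k hk l hl => ((hL2 k hk).integrable_mul (hL2 l hl)).const_mul _
  calc ∫ x, (∑ k ∈ s, a k * h k x) ^ 2 ∂μ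
      = ∫ x, ∑ k ∈ s, ∑ l ∈ s, a k * a l * (h k x * h l x) ∂μ := by
        congr 1 with x
        rw [sq, Finset.sum_mul_sum]
        exact Finset.sum_congr rfl fun k _ => Finset.sum_congr rfl fun l _ => by ring
    _ = ∑ k ∈ s, ∑ l ∈ s, a k * a l * ∫ x, h k x * h l x ∂μ := by
        rw [integral_finsetSum _ fun k hk => integrable_finsetSum _ (hint k hk)]
        refine Finset.sum_congr rfl fun k hk => ?_
        rw [integral_finsetSum _ (hint k hk)]
        exact Finset.sum_congr rfl fun l _ => integral_const_mul _ _
    _ = ∑ k ∈ s, a k ^ 2 := by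
        refine Finset.sum_congr rfl fun k hk => ?_
        rw [Finset.sum_eq_single_of_mem k hk fun l hl hlk => by
          rw [horth k hk l hl, if_neg hlk.symm, mul_zero]]
        rw [horth k hk k hk, if_pos rfl, mul_one, sq]

theorem sInf_mul_integral_sq_le (K : Submodule ℝ (E → ℝ)) (w : E → ℝ) {C : Set ℝ}
    (hC : BddBelow C) (hKC : ∀ v ∈ K, ∫ x, v x ^ 2 ∂μ = 1 → ∫ x, w x ^ 2 * v x ^ 2 ∂μ ∈ C)
    {V : E → ℝ} (hV : V ∈ K) :
    sInf C * ∫ x, V x ^ 2 ∂μ ≤ ∫ x, (w x * V x) ^ 2 ∂μ := by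
  simp only [mul_pow]
  set S := ∫ x, V x ^ 2 ∂μ
  have hS0 : 0 ≤ S := integral_nonneg fun x => sq_nonneg (V x)
  rcases hS0.eq_or_lt with hS | hS
  · rw [← hS, mul_zero]
    exact integral_nonneg fun x => by positivity
  have hc : (Real.sqrt S)⁻¹ ^ 2 = S⁻¹ := by rw [inv_pow, Real.sq_sqrt hS.le]
  have hmem := hKC _ (K.smul_mem (Real.sqrt S)⁻¹ hV) (by
    simp only [Pi.smul_apply, smul_eq_mul, mul_pow]
    rw [integral_const_mul, hc, inv_mul_cancel₀ hS.ne'])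
  have hle := csInf_le hC hmem
  simp only [Pi.smul_apply, smul_eq_mul, mul_pow, mul_left_comm _ ((Real.sqrt S)⁻¹ ^ 2)] at hle
  rw [integral_const_mul, hc, inv_mul_eq_div, le_div_iff₀ hS] at hle
  exact hle

theorem integral_sq_mul_le_of_abs_le {g f : E → ℝ} {M : ℝ} (hM : ∀ x, |g x| ≤ M)
    (hf : MemLp f 2 μ) :
    ∫ x, (g x * f x) ^ 2 ∂μ ≤ M ^ 2 * ∫ x, f x ^ 2 ∂μ := by
  rw [← integral_const_mul]
  refine integral_mono_of_nonneg (Eventually.of_forall fun x => sq_nonneg _)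
    (hf.integrable_sq.const_mul _) (Eventually.of_forall fun x => ?_)
  dsimp only
  rw [mul_pow, ← sq_abs (g x)]
  exact mul_le_mul_of_nonneg_right (pow_le_pow_left₀ (abs_nonneg _) (hM x) 2) (sq_nonneg _)

theorem half_integral_sq_sub_le_integral_sq_add {f g : E → ℝ} (hf : MemLp f 2 μ)
    (hg : MemLp g 2 μ) :
    (∫ x, f x ^ 2 ∂μ) / 2 - ∫ x, g x ^ 2 ∂μ ≤ ∫ x, (f x + g x) ^ 2 ∂μ := by
  rw [← integral_div, ← integral_sub (hf.integrable_sq.div_const _) hg.integrable_sq]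
  refine integral_mono ((hf.integrable_sq.div_const _).sub hg.integrable_sq)
    (hf.add hg).integrable_sq fun x => ?_
  -- `(f + g)² - (f²/2 - g²) = (f + 2g)²/2`
  nlinarith [sq_nonneg (f x + 2 * g x)]

theorem integral_sq_mul_sub_lt {g U V : E → ℝ} {M ε : ℝ} (hg : AEStronglyMeasurable g μ)
    (hM : ∀ x, |g x| ≤ M) (hU : MemLp U 2 μ) (hV : MemLp V 2 μ)
    (hε : ∫ x, (U x - V x) ^ 2 ∂μ ≤ ε) (hA : 4 * M ^ 2 * ε < ∫ x, (g x * V x) ^ 2 ∂μ) :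
    ∫ x, (g x * (U x - V x)) ^ 2 ∂μ < ∫ x, (g x * U x) ^ 2 ∂μ := by
  have hg_top : MemLp g ⊤ μ := memLp_top_of_bound hg M (Eventually.of_forall hM)
  have hsplit :=
    half_integral_sq_sub_le_integral_sq_add (hV.mul' hg_top) ((hU.sub hV).mul' hg_top)
  have htail := integral_sq_mul_le_of_abs_le hM (hU.sub hV)
  simp only [Pi.sub_apply, ← mul_add, add_sub_cancel] at hsplit htail
  have hMε := mul_le_mul_of_nonneg_left hε (sq_nonneg M)
  linarith
end

theorem stmt13_general {E : Type*} [MeasurableSpace E]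
    (μ : Measure E) [IsProbabilityMeasure μ]
    (h : ℕ → E → ℝ)
    (horth : ∀ i j : ℕ, 1 ≤ i → 1 ≤ j →
      ∫ s, h i s * h j s ∂μ = if i = j then (1 : ℝ) else 0)
    (hL4 : ∀ j : ℕ, 1 ≤ j → MemLp (h j) 4 μ)
    (U : E → ℝ) (αu : ℕ → ℝ)
    (hUL2 : MemLp U 2 μ)
    (d : ℕ) (M : ℝ)
    (hM : ∀ j : ℕ, 1 ≤ j → j ≤ d → ∀ s, |h j s| ≤ M)
    (ε : ℝ)
    (htail : ∫ s, (U s - ∑ k ∈ Finset.Icc 1 d, αu k * h k s) ^ 2 ∂μ ≤ ε)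
    (hεsmall : ε <
      sInf {x : ℝ | ∃ j : ℕ, 1 ≤ j ∧ j ≤ d ∧
          ∃ v ∈ Submodule.span ℝ (h '' {k : ℕ | 1 ≤ k ∧ k ≤ d ∧ k ≠ j}),
            (∫ s, (v s) ^ 2 ∂μ = 1) ∧ x = ∫ s, (h j s) ^ 2 * (v s) ^ 2 ∂μ} *
        (∑ k ∈ Finset.Icc 1 d, (αu k) ^ 2) / (4 * M ^ 2)) :
    ∀ j : ℕ, 1 ≤ j → j ≤ d → αu j = 0 →
      ∫ s, (h j s * (U s - ∑ k ∈ Finset.Icc 1 d, αu k * h k s)) ^ 2 ∂μ <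
        ∫ s, (h j s * U s) ^ 2 ∂μ := by
  intro j hj1 hjd hαj
  have hh2 : ∀ k ∈ Finset.Icc 1 d, MemLp (h k) 2 μ := fun k hk =>
    (hL4 k (Finset.mem_Icc.1 hk).1).mono_exponent (by norm_num)
  have hVnorm := integral_sq_sum_mul_of_orthonormal (μ := μ) _ h αu hh2 fun k hk l hl =>
    horth k l (Finset.mem_Icc.1 hk).1 (Finset.mem_Icc.1 hl).1
  have hVspan := sum_mul_mem_of_coeff_eq_zero (Finset.Icc 1 d) h αu
    (Submodule.span ℝ (h '' {k | 1 ≤ k ∧ k ≤ d ∧ k ≠ j})) (fun k hk hkj =>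
    Submodule.subset_span ⟨k, ⟨(Finset.mem_Icc.1 hk).1, (Finset.mem_Icc.1 hk).2, hkj⟩, rfl⟩) hαj
  have hε0 : 0 ≤ ε := (integral_nonneg fun s => sq_nonneg _).trans htail
  have hM0 : M ≠ 0 := by rintro rfl; simp at hεsmall; linarith
  rw [lt_div_iff₀ (by positivity), ← hVnorm] at hεsmall
  refine integral_sq_mul_sub_lt (hL4 j hj1).1 (hM j hj1 hjd) hUL2
    (memLp_finsetSum _ fun k hk => (hh2 k hk).const_mul _) htail ?_
  calc 4 * M ^ 2 * ε = ε * (4 * M ^ 2) := mul_comm _ _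
    _ < _ := hεsmall
    _ ≤ _ := sInf_mul_integral_sq_le _ (h j)
      ⟨0, by rintro _ ⟨_, -, -, _, -, -, rfl⟩; exact integral_nonneg fun s => by positivity⟩
      (fun v hv hv1 => by exact ⟨j, hj1, hjd, v, hv, hv1, rfl⟩) hVspan

/-- Let `{h_j}` be an orthonormal system in `L²(D, f_S)` with each
`h_j ∈ L⁴`, `U = Σ_{j≥1} α_u^{(j)} h_j` (L²-convergent), `U_{>d} = U − Σ_{k≤d} α_u^{(k)} h_k`
and `S_in = Σ_{j≤d} (α_u^{(j)})²`.  Assume (i) `max_{j≤d} ‖h_j‖_∞ ≤ M`; (ii) each zero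
set `{h_j = 0}` (`j ≤ d`) is `f_S`-null; (iii) `‖U_{>d}‖² ≤ ε` with
`ε < c_* S_in/(4M²)`, where `c_*` is the smallest value of `∫ h_j² v² f_S` over `j ≤ d`
and `v` in the unit sphere of `span{h_k : k ≤ d, k ≠ j}`.  Then for every `j ≤ d` with
`α_u^{(j)} = 0`, `‖h_j U‖² > ‖h_j U_{>d}‖²`. -/
theorem stmt13 {E : Type*} [MeasurableSpace E]
    (μ : Measure E) [IsProbabilityMeasure μ]
    (h : ℕ → E → ℝ)
    (horth : ∀ i j : ℕ, 1 ≤ i → 1 ≤ j →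
      ∫ s, h i s * h j s ∂μ = if i = j then (1 : ℝ) else 0)
    (hL4 : ∀ j : ℕ, 1 ≤ j → MemLp (h j) 4 μ)
    (U : E → ℝ) (αu : ℕ → ℝ)
    (hUL2 : MemLp U 2 μ)
    (hαusum : Summable fun k => (αu k) ^ 2)
    (hUexp : Tendsto
      (fun m => ∫ s, (U s - ∑ k ∈ Finset.Icc 1 m, αu k * h k s) ^ 2 ∂μ) atTop (nhds 0))
    (d : ℕ) (M : ℝ)
    (hM : ∀ j : ℕ, 1 ≤ j → j ≤ d → ∀ s, |h j s| ≤ M)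
    (hzero : ∀ j : ℕ, 1 ≤ j → j ≤ d → μ {s | h j s = 0} = 0)
    (ε : ℝ)
    (htail : ∫ s, (U s - ∑ k ∈ Finset.Icc 1 d, αu k * h k s) ^ 2 ∂μ ≤ ε)
    (hεsmall : ε <
      sInf {x : ℝ | ∃ j : ℕ, 1 ≤ j ∧ j ≤ d ∧
          ∃ v ∈ Submodule.span ℝ (h '' {k : ℕ | 1 ≤ k ∧ k ≤ d ∧ k ≠ j}),
            (∫ s, (v s) ^ 2 ∂μ = 1) ∧ x = ∫ s, (h j s) ^ 2 * (v s) ^ 2 ∂μ} *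
        (∑ k ∈ Finset.Icc 1 d, (αu k) ^ 2) / (4 * M ^ 2)) :
    ∀ j : ℕ, 1 ≤ j → j ≤ d → αu j = 0 →
      ∫ s, (h j s * (U s - ∑ k ∈ Finset.Icc 1 d, αu k * h k s)) ^ 2 ∂μ <
        ∫ s, (h j s * U s) ^ 2 ∂μ :=
  stmt13_general μ h horth hL4 U αu hUL2 d M hM ε htail hεsmall
end
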